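/- Conversely, for the polynomial p(r) = r² − (2 − γ − ηκ) r + (1 − γ) with κ > 0, if γ ≥ 2 or γ ≤ 0 or ηκ ≥ 2(2 − γ) or ηκ ≤ 0, then p has a root of modulus at least 1. -/

import Mathlib

/-- Converse of Schur stability: outside the stability domain, the polynomial
`r² − (2 − γ − ηκ) r + (1 − γ)` has a root of modulus at least 1. -/
theorem schur_instability (η γ κ : ℝ) (hκ : 0 < κ)
    (h : 2 ≤ γ ∨ γ ≤ 0 ∨ 2 * (2 - γ) ≤ η * κ ∨ η * κ ≤ 0) :
    ∃ r : ℂ, r ^ 2 - ((2 : ℂ) - (γ : ℂ) - (η : ℂ) * (κ : ℂ)) * r + (1 - (γ : ℂ)) = 0 ∧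
      1 ≤ ‖r‖ := by
  have hcoef : ((2 : ℂ) - (γ : ℂ) - (η : ℂ) * (κ : ℂ)) = ((2 - γ - η * κ : ℝ) : ℂ) := by
    push_cast; ring
  have hconst : ((1 : ℂ) - (γ : ℂ)) = ((1 - γ : ℝ) : ℂ) := by push_cast; ring
  rw [hcoef, hconst]
  set b : ℝ := 2 - γ - η * κ with hbdef
  set c : ℝ := 1 - γ with hcdef
  rcases le_or_gt 0 (b ^ 2 - 4 * c) with hD | hD
  · -- real roots
    set s : ℝ := Real.sqrt (b ^ 2 - 4 * c) with hsdef
    have hs0 : 0 ≤ s := Real.sqrt_nonneg _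
    have hs2 : s ^ 2 = b ^ 2 - 4 * c := Real.sq_sqrt hD
    have key : 2 - b ≤ s ∨ 2 + b ≤ s := by
      rcases h with h | h | h | h
      · rcases le_or_gt (η * κ) 0 with h2 | h2
        · left; nlinarith [sq_nonneg (s + b - 2)]
        · right; nlinarith [sq_nonneg (s - b - 2)]
      · rcases le_or_gt 0 b with h2 | h2
        · left; nlinarith
        · right; nlinarith
      · right; nlinarith [sq_nonneg (s - b - 2)]
      · left; nlinarith [sq_nonneg (s + b - 2)]
    rcases key with key | key
    · refine ⟨(((b + s) / 2 : ℝ) : ℂ), ?_, ?_⟩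
      · have hr : ((b + s) / 2) ^ 2 - b * ((b + s) / 2) + c = 0 := by nlinarith
        exact_mod_cast congrArg (fun x : ℝ => (x : ℂ)) hr
      · rw [Complex.norm_real, Real.norm_eq_abs]
        have : (1 : ℝ) ≤ (b + s) / 2 := by linarith
        calc (1 : ℝ) ≤ (b + s) / 2 := this
          _ ≤ |(b + s) / 2| := le_abs_self _
    · refine ⟨(((b - s) / 2 : ℝ) : ℂ), ?_, ?_⟩
      · have hr : ((b - s) / 2) ^ 2 - b * ((b - s) / 2) + c = 0 := by nlinarith
        exact_mod_cast congrArg (fun x : ℝ => (x : ℂ)) hr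
      · rw [Complex.norm_real, Real.norm_eq_abs]
        have : (b - s) / 2 ≤ -1 := by linarith
        calc (1 : ℝ) ≤ -((b - s) / 2) := by linarith
          _ ≤ |(b - s) / 2| := neg_le_abs _
  · -- complex conjugate roots; show c ≥ 1
    have hc1 : 1 ≤ c := by
      rcases h with h | h | h | h
      · nlinarith
      · simp only [hcdef]; linarith
      · nlinarith [sq_nonneg (b + 2)]
      · nlinarith [sq_nonneg (b - 2)]
    set s : ℝ := Real.sqrt (4 * c - b ^ 2) with hsdef
    have hs2 : s ^ 2 = 4 * c - b ^ 2 := Real.sq_sqrt (by linarith)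
    have hsC : ((s : ℂ)) ^ 2 = 4 * (c : ℂ) - (b : ℂ) ^ 2 := by exact_mod_cast hs2
    refine ⟨((b / 2 : ℝ) : ℂ) + Complex.I * ((s / 2 : ℝ) : ℂ), ?_, ?_⟩
    · push_cast
      linear_combination ((s : ℂ)) ^ 2 / 4 * Complex.I_sq + (-1 / 4 : ℂ) * hsC
    · have habs : ‖(((b / 2 : ℝ) : ℂ) + Complex.I * ((s / 2 : ℝ) : ℂ))‖ ^ 2 = c := by
        rw [Complex.sq_norm, Complex.normSq_apply]
        simp
        linear_combination hs2 / 4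
      nlinarith [norm_nonneg
        (((b / 2 : ℝ) : ℂ) + Complex.I * ((s / 2 : ℝ) : ℂ))]
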